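/- arXiv:1603.03528 — 4 statements merged into one kernel-verified Lean document; each statement's English description precedes it below -/
import Mathlib

section
/- The bracket {·,·}^ defined by {q₁,q₂}^ = 0, {qᵢ,pᵢ}^ = 1+qᵢ², {q₁,p₂}^ = {q₂,p₁}^ = q₁q₂, {p₁,p₂}^ = q₁p₂ − q₂p₁ satisfies the Jacobi identity, hence is a Poisson bracket on ℝ⁴. -/
/-- Partial derivative along the `i`-th coordinate on `ℝⁿ`. -/
noncomputable def pd {n : ℕ} (i : Fin n) (F : (Fin n → ℝ) → ℝ) (x : Fin n → ℝ) : ℝ :=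
  deriv (fun t => F (Function.update x i t)) (x i)

/-- Structure matrix of the deformed bracket `{·,·}^` on `ℝ⁴` with coordinates
`x = (q₁, q₂, p₁, p₂)`. -/
noncomputable def Phat (x : Fin 4 → ℝ) (a b : Fin 4) : ℝ :=
  if a = 0 ∧ b = 2 then 1 + (x 0) ^ 2
  else if a = 2 ∧ b = 0 then -(1 + (x 0) ^ 2)
  else if a = 1 ∧ b = 3 then 1 + (x 1) ^ 2
  else if a = 3 ∧ b = 1 then -(1 + (x 1) ^ 2)
  else if a = 0 ∧ b = 3 then x 0 * x 1
  else if a = 3 ∧ b = 0 then -(x 0 * x 1)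
  else if a = 1 ∧ b = 2 then x 0 * x 1
  else if a = 2 ∧ b = 1 then -(x 0 * x 1)
  else if a = 2 ∧ b = 3 then x 0 * x 3 - x 1 * x 2
  else if a = 3 ∧ b = 2 then -(x 0 * x 3 - x 1 * x 2)
  else 0

set_option linter.unnecessarySimpa false

lemma dh1 (a b s : ℝ) : deriv (fun t => a * t - b) s = a := by
  simpa using ((hasDerivAt_id s).const_mul a).sub_const b |>.deriv
lemma dh2 (a b s : ℝ) : deriv (fun t => a - b * t) s = -b := by
  simpa using (((hasDerivAt_id s).const_mul b).const_sub a).deriv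
lemma dh3 (a b s : ℝ) : deriv (fun t => t * a - b) s = a := by
  simpa using ((hasDerivAt_id s).mul_const a).sub_const b |>.deriv
lemma dh4 (a b s : ℝ) : deriv (fun t => a - t * b) s = -b := by
  simpa using (((hasDerivAt_id s).mul_const b).const_sub a).deriv
lemma dh5 (a s : ℝ) : deriv (fun t => a * t) s = a := by
  simpa using ((hasDerivAt_id s).const_mul a).deriv
lemma dh6 (a s : ℝ) : deriv (fun t => t * a) s = a := by
  simpa using ((hasDerivAt_id s).mul_const a).deriv

set_option maxHeartbeats 4000000 in
/-- The deformed bracket `{·,·}^` satisfies the Jacobi identity, i.e., its structure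
matrix `P^{ab} = {x_a, x_b}^` satisfies
`Σ_d (P^{da} ∂_d P^{bc} + P^{db} ∂_d P^{ca} + P^{dc} ∂_d P^{ab}) = 0` for all `a, b, c`;
hence `{·,·}^` is a Poisson bracket on `ℝ⁴`. -/
theorem deformed_bracket_jacobi :
    ∀ (x : Fin 4 → ℝ) (a b c : Fin 4),
      ∑ d : Fin 4,
        (Phat x d a * pd d (fun y => Phat y b c) x
          + Phat x d b * pd d (fun y => Phat y c a) x
          + Phat x d c * pd d (fun y => Phat y a b) x) = 0 := by
  
  intro x a b c
  fin_cases a <;> fin_cases b <;> fin_cases c <;>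
    · simp only [Fin.sum_univ_four]
      simp [pd, Phat, Function.update, dh1, dh2, dh3, dh4, dh5, dh6]
      try ring
end

section
/- The Poisson bracket {·,·}^ (with {qᵢ,pᵢ}^ = 1+qᵢ², {q₁,p₂}^ = q₁q₂, {p₁,p₂}^ = q₁p₂−q₂p₁) is compatible with the canonical bracket {·,·} on ℝ⁴: the sum {·,·} + {·,·}^ also satisfies the Jacobi identity. -/
/-- Structure matrix of the canonical bracket on `ℝ⁴`: `{qᵢ, pⱼ} = δᵢⱼ`, others zero. -/
noncomputable def Pcan (a b : Fin 4) : ℝ :=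
  if a = 0 ∧ b = 2 then 1
  else if a = 2 ∧ b = 0 then -1
  else if a = 1 ∧ b = 3 then 1
  else if a = 3 ∧ b = 1 then -1
  else 0

/-- Structure matrix of the sum of the canonical and deformed brackets. -/
noncomputable def Psum (x : Fin 4 → ℝ) (a b : Fin 4) : ℝ := Pcan a b + Phat x a b

lemma d_const_mul (c y : ℝ) : deriv (fun t => c * t) y = c := by
  simpa using ((hasDerivAt_id y).const_mul c).deriv

lemma d_mul_const (c y : ℝ) : deriv (fun t => t * c) y = c := by
  simpa using ((hasDerivAt_id y).mul_const c).deriv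

lemma d_const_mul_sub (c e y : ℝ) : deriv (fun t => c * t - e) y = c := by
  simpa using (((hasDerivAt_id y).const_mul c).sub_const e).deriv

lemma d_mul_const_sub (c e y : ℝ) : deriv (fun t => t * c - e) y = c := by
  simpa using (((hasDerivAt_id y).mul_const c).sub_const e).deriv

lemma d_sub_const_mul (c e y : ℝ) : deriv (fun t => c - e * t) y = -e := by
  simpa using (((hasDerivAt_id y).const_mul e).const_sub c).deriv

lemma d_sub_mul_const (c e y : ℝ) : deriv (fun t => c - t * e) y = -e := by
  simpa using (((hasDerivAt_id y).mul_const e).const_sub c).deriv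

set_option maxHeartbeats 2000000 in
/-- The deformed Poisson bracket `{·,·}^` is compatible with the canonical bracket:
the sum of the two brackets also satisfies the Jacobi identity. -/
theorem brackets_compatible :
    ∀ (x : Fin 4 → ℝ) (a b c : Fin 4),
      ∑ d : Fin 4,
        (Psum x d a * pd d (fun y => Psum y b c) x
          + Psum x d b * pd d (fun y => Psum y c a) x
          + Psum x d c * pd d (fun y => Psum y a b) x) = 0 := by
  intro x a b c
  fin_cases a <;> fin_cases b <;> fin_cases c <;>
    · simp (config := { decide := true }) [Psum, pd, Phat, Pcan, Fin.sum_univ_four,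
        Function.update_apply, d_const_mul, d_mul_const, d_const_mul_sub,
        d_mul_const_sub, d_sub_const_mul, d_sub_mul_const]
      try ring
end

section
/- For the quadratic forms T̂ = (1/2)(p₁²+p₂²+(q₂p₁−q₁p₂)²) and T_K = K^{ij}pᵢpⱼ with K the generic planar Killing tensor (parameters c₁,…,c₆), the canonical Poisson bracket {T̂, T_K} does not vanish identically unless the corresponding geodesic flows are compatible; however {T̂, T_K}^ = 0 with respect to the deformed bracket {·,·}^. -/
/-- The deformed bracket `{F,G}^ = Σ_{a,b} {x_a,x_b}^ ∂_aF ∂_bG`. -/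
noncomputable def brHat (F G : (Fin 4 → ℝ) → ℝ) (x : Fin 4 → ℝ) : ℝ :=
  ∑ a : Fin 4, ∑ b : Fin 4, Phat x a b * pd a F x * pd b G x

/-- Nonholonomic kinetic energy `T̂ = (1/2)(p₁² + p₂² + (q₂p₁ - q₁p₂)²)`. -/
noncomputable def That (x : Fin 4 → ℝ) : ℝ :=
  (1 / 2) * ((x 2) ^ 2 + (x 3) ^ 2 + (x 1 * x 2 - x 0 * x 3) ^ 2)

/-- Quadratic form `T_K = K^{ij} pᵢ pⱼ` of the generic planar Killing tensor. -/
noncomputable def TK (c1 c2 c3 c4 c5 c6 : ℝ) (x : Fin 4 → ℝ) : ℝ :=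
  (c1 * (x 1) ^ 2 + 2 * c2 * x 1 + c3) * (x 2) ^ 2
    + 2 * (-(c1 * x 0 * x 1) - c2 * x 0 - c4 * x 1 + c6) * x 2 * x 3
    + (c1 * (x 0) ^ 2 + 2 * c4 * x 0 + c5) * (x 3) ^ 2

lemma deriv_congr_quad {f : ℝ → ℝ} (A B C : ℝ) (h : ∀ t, f t = A * t ^ 2 + B * t + C)
    (s : ℝ) : deriv f s = 2 * A * s + B := by
  have hf : f = fun t => A * t ^ 2 + B * t + C := funext h
  have hd : HasDerivAt (fun t : ℝ => A * t ^ 2 + B * t + C) (A * (2 * s) + B) s := by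
    have h1 := (hasDerivAt_pow 2 s).const_mul A
    have h2 := (hasDerivAt_id s).const_mul B
    simpa using (h1.add h2).add_const C
  rw [hf, hd.deriv]; ring

lemma upd0 (x : Fin 4 → ℝ) (t : ℝ) :
    Function.update x 0 t 0 = t ∧ Function.update x 0 t 1 = x 1 ∧
    Function.update x 0 t 2 = x 2 ∧ Function.update x 0 t 3 = x 3 := by
  refine ⟨Function.update_self _ _ _, ?_, ?_, ?_⟩ <;>
    exact Function.update_of_ne (by decide) _ _

lemma pd0_That (x : Fin 4 → ℝ) :
    pd 0 That x = (x 3) ^ 2 * x 0 - x 1 * x 2 * x 3 := by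
  simp only [pd, That, Function.update_self,
    Function.update_of_ne (show (1:Fin 4) ≠ 0 by decide),
    Function.update_of_ne (show (2:Fin 4) ≠ 0 by decide),
    Function.update_of_ne (show (3:Fin 4) ≠ 0 by decide)]
  exact (deriv_congr_quad ((1/2)*(x 3)^2) (-(x 1 * x 2 * x 3))
    ((1/2)*((x 2)^2+(x 3)^2+(x 1)^2*(x 2)^2)) (fun t => by ring) (x 0)).trans (by ring)

lemma pd1_That (x : Fin 4 → ℝ) :
    pd 1 That x = (x 2) ^ 2 * x 1 - x 0 * x 2 * x 3 := by
  simp only [pd, That, Function.update_self,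
    Function.update_of_ne (show (0:Fin 4) ≠ 1 by decide),
    Function.update_of_ne (show (2:Fin 4) ≠ 1 by decide),
    Function.update_of_ne (show (3:Fin 4) ≠ 1 by decide)]
  exact (deriv_congr_quad ((1/2)*(x 2)^2) (-(x 0 * x 2 * x 3))
    ((1/2)*((x 2)^2+(x 3)^2+(x 0)^2*(x 3)^2)) (fun t => by ring) (x 1)).trans (by ring)

lemma pd2_That (x : Fin 4 → ℝ) :
    pd 2 That x = (1 + (x 1) ^ 2) * x 2 - x 0 * x 1 * x 3 := by
  simp only [pd, That, Function.update_self,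
    Function.update_of_ne (show (0:Fin 4) ≠ 2 by decide),
    Function.update_of_ne (show (1:Fin 4) ≠ 2 by decide),
    Function.update_of_ne (show (3:Fin 4) ≠ 2 by decide)]
  exact (deriv_congr_quad ((1/2)*(1+(x 1)^2)) (-(x 0 * x 1 * x 3))
    ((1/2)*((x 3)^2+(x 0)^2*(x 3)^2)) (fun t => by ring) (x 2)).trans (by ring)

lemma pd3_That (x : Fin 4 → ℝ) :
    pd 3 That x = (1 + (x 0) ^ 2) * x 3 - x 0 * x 1 * x 2 := by
  simp only [pd, That, Function.update_self,
    Function.update_of_ne (show (0:Fin 4) ≠ 3 by decide),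
    Function.update_of_ne (show (1:Fin 4) ≠ 3 by decide),
    Function.update_of_ne (show (2:Fin 4) ≠ 3 by decide)]
  exact (deriv_congr_quad ((1/2)*(1+(x 0)^2)) (-(x 0 * x 1 * x 2))
    ((1/2)*((x 2)^2+(x 1)^2*(x 2)^2)) (fun t => by ring) (x 3)).trans (by ring)

lemma pd0_TK (c1 c2 c3 c4 c5 c6 : ℝ) (x : Fin 4 → ℝ) :
    pd 0 (TK c1 c2 c3 c4 c5 c6) x
      = 2 * c1 * x 0 * (x 3) ^ 2 + 2 * c4 * (x 3) ^ 2
        + 2 * (-(c1 * x 1) - c2) * x 2 * x 3 := by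
  simp only [pd, TK, Function.update_self,
    Function.update_of_ne (show (1:Fin 4) ≠ 0 by decide),
    Function.update_of_ne (show (2:Fin 4) ≠ 0 by decide),
    Function.update_of_ne (show (3:Fin 4) ≠ 0 by decide)]
  exact (deriv_congr_quad (c1 * (x 3)^2)
    (2*(-(c1 * x 1) - c2) * x 2 * x 3 + 2 * c4 * (x 3)^2)
    ((c1*(x 1)^2+2*c2*x 1+c3)*(x 2)^2 + 2*(-(c4 * x 1)+c6)*x 2*x 3 + c5*(x 3)^2)
    (fun t => by ring) (x 0)).trans (by ring)

lemma pd1_TK (c1 c2 c3 c4 c5 c6 : ℝ) (x : Fin 4 → ℝ) :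
    pd 1 (TK c1 c2 c3 c4 c5 c6) x
      = 2 * c1 * x 1 * (x 2) ^ 2 + 2 * c2 * (x 2) ^ 2
        + 2 * (-(c1 * x 0) - c4) * x 2 * x 3 := by
  simp only [pd, TK, Function.update_self,
    Function.update_of_ne (show (0:Fin 4) ≠ 1 by decide),
    Function.update_of_ne (show (2:Fin 4) ≠ 1 by decide),
    Function.update_of_ne (show (3:Fin 4) ≠ 1 by decide)]
  exact (deriv_congr_quad (c1 * (x 2)^2)
    (2*c2*(x 2)^2 + 2*(-(c1 * x 0) - c4) * x 2 * x 3)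
    (c3*(x 2)^2 + 2*(-(c2 * x 0)+c6)*x 2*x 3 + (c1*(x 0)^2+2*c4*x 0+c5)*(x 3)^2)
    (fun t => by ring) (x 1)).trans (by ring)

lemma pd2_TK (c1 c2 c3 c4 c5 c6 : ℝ) (x : Fin 4 → ℝ) :
    pd 2 (TK c1 c2 c3 c4 c5 c6) x
      = 2 * (c1 * (x 1) ^ 2 + 2 * c2 * x 1 + c3) * x 2
        + 2 * (-(c1 * x 0 * x 1) - c2 * x 0 - c4 * x 1 + c6) * x 3 := by
  simp only [pd, TK, Function.update_self,
    Function.update_of_ne (show (0:Fin 4) ≠ 2 by decide),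
    Function.update_of_ne (show (1:Fin 4) ≠ 2 by decide),
    Function.update_of_ne (show (3:Fin 4) ≠ 2 by decide)]
  exact (deriv_congr_quad (c1*(x 1)^2+2*c2*x 1+c3)
    (2*(-(c1 * x 0 * x 1) - c2 * x 0 - c4 * x 1 + c6) * x 3)
    ((c1*(x 0)^2+2*c4*x 0+c5)*(x 3)^2)
    (fun t => by ring) (x 2)).trans (by ring)

lemma pd3_TK (c1 c2 c3 c4 c5 c6 : ℝ) (x : Fin 4 → ℝ) :
    pd 3 (TK c1 c2 c3 c4 c5 c6) x
      = 2 * (-(c1 * x 0 * x 1) - c2 * x 0 - c4 * x 1 + c6) * x 2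
        + 2 * (c1 * (x 0) ^ 2 + 2 * c4 * x 0 + c5) * x 3 := by
  simp only [pd, TK, Function.update_self,
    Function.update_of_ne (show (0:Fin 4) ≠ 3 by decide),
    Function.update_of_ne (show (1:Fin 4) ≠ 3 by decide),
    Function.update_of_ne (show (2:Fin 4) ≠ 3 by decide)]
  exact (deriv_congr_quad (c1*(x 0)^2+2*c4*x 0+c5)
    (2*(-(c1 * x 0 * x 1) - c2 * x 0 - c4 * x 1 + c6) * x 2)
    ((c1*(x 1)^2+2*c2*x 1+c3)*(x 2)^2)
    (fun t => by ring) (x 3)).trans (by ring)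

/-- For the generic planar Killing tensor `K` (parameters `c₁,…,c₆`), the quadratic
forms `T̂` and `T_K` are in involution with respect to the deformed bracket:
`{T̂, T_K}^ = 0` identically in `(q, p, c)`. -/
theorem That_TK_involution_deformed :
    ∀ (c1 c2 c3 c4 c5 c6 : ℝ) (x : Fin 4 → ℝ),
      brHat That (TK c1 c2 c3 c4 c5 c6) x = 0 := by
  intro c1 c2 c3 c4 c5 c6 x
  simp only [brHat, Fin.sum_univ_four, pd0_That, pd1_That, pd2_That, pd3_That,
    pd0_TK, pd1_TK, pd2_TK, pd3_TK,
    show Phat x 0 0 = 0 from rfl, show Phat x 0 1 = 0 from rfl,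
    show Phat x 0 2 = 1 + (x 0) ^ 2 from rfl, show Phat x 0 3 = x 0 * x 1 from rfl,
    show Phat x 1 0 = 0 from rfl, show Phat x 1 1 = 0 from rfl,
    show Phat x 1 2 = x 0 * x 1 from rfl, show Phat x 1 3 = 1 + (x 1) ^ 2 from rfl,
    show Phat x 2 0 = -(1 + (x 0) ^ 2) from rfl, show Phat x 2 1 = -(x 0 * x 1) from rfl,
    show Phat x 2 2 = 0 from rfl, show Phat x 2 3 = x 0 * x 3 - x 1 * x 2 from rfl,
    show Phat x 3 0 = -(x 0 * x 1) from rfl, show Phat x 3 1 = -(1 + (x 1) ^ 2) from rfl,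
    show Phat x 3 2 = -(x 0 * x 3 - x 1 * x 2) from rfl, show Phat x 3 3 = 0 from rfl]
  ring
end

section
/- If V(q₁,q₂) = F₁(ρ̂) + F₂(φ)/ρ̂² with ρ̂ = √((q₁²+q₂²)/(1+q₁²+q₂²)) and φ = arctan(q₁/q₂), then V satisfies the compatibility condition d(K^{(2)}ĝ⁻¹ dV) = 0 for the polar Killing tensor K^{(2)}. -/
/-- Partial derivative `∂₁`. -/
noncomputable def pd1 (f : ℝ → ℝ → ℝ) (a b : ℝ) : ℝ := deriv (fun x => f x b) a

/-- Partial derivative `∂₂`. -/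
noncomputable def pd2 (f : ℝ → ℝ → ℝ) (a b : ℝ) : ℝ := deriv (fun y => f a y) b

/-- Partial derivative `∂_k` indexed by `Fin 2`. -/
noncomputable def pdc (k : Fin 2) (f : ℝ → ℝ → ℝ) (q1 q2 : ℝ) : ℝ :=
  if k = 0 then pd1 f q1 q2 else pd2 f q1 q2

/-- The (1,1)-tensor `M = K^{(2)} ĝ⁻¹` for the polar Killing tensor
`K^{(2)} = [[q₂², -q₁q₂],[-q₁q₂, q₁²]]`. -/
noncomputable def Khat2 (q1 q2 : ℝ) : Matrix (Fin 2) (Fin 2) ℝ :=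
  !![q2 ^ 2, -q1 * q2; -q1 * q2, q1 ^ 2]
    * (!![1 + q2 ^ 2, -q1 * q2; -q1 * q2, 1 + q1 ^ 2])⁻¹

/-- Nonholonomic radial coordinate `ρ̂ = √((q₁²+q₂²)/(1+q₁²+q₂²))`. -/
noncomputable def rhoHat (q1 q2 : ℝ) : ℝ :=
  Real.sqrt ((q1 ^ 2 + q2 ^ 2) / (1 + q1 ^ 2 + q2 ^ 2))

/-- Angle coordinate `φ = arctan(q₁/q₂)`. -/
noncomputable def phiC (q1 q2 : ℝ) : ℝ := Real.arctan (q1 / q2)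

lemma Khat2_apply' (s t : ℝ) :
    Khat2 s t = (1 + s^2 + t^2)⁻¹ • !![t^2, -(s*t); -(s*t), s^2] := by
  have hd : (1 + s^2 + t^2) ≠ 0 := by positivity
  have hdet : (!![1 + t ^ 2, -s * t; -s * t, 1 + s ^ 2]).det = 1 + s^2 + t^2 := by
    simp [Matrix.det_fin_two_of]; ring
  rw [Khat2, Matrix.inv_def, hdet, Matrix.adjugate_fin_two_of, Ring.inverse_eq_inv']
  rw [Matrix.mul_smul]
  congr 1
  ext i j
  fin_cases i <;> fin_cases j <;>
    simp [Matrix.mul_apply, Fin.sum_univ_two] <;> ring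

lemma V_eq' (F1 F2 : ℝ → ℝ) (x t : ℝ) :
    F1 (rhoHat x t) + F2 (phiC x t) / (rhoHat x t) ^ 2
      = F1 (rhoHat x t) + F2 (phiC x t) * ((1 + x^2 + t^2) / (x^2 + t^2)) := by
  have h1 : (rhoHat x t) ^ 2 = (x^2 + t^2) / (1 + x^2 + t^2) := by
    rw [rhoHat, Real.sq_sqrt (by positivity)]
  rw [h1, div_div_eq_mul_div, mul_div_assoc]

lemma pd1_V_eq (F1 F2 : ℝ → ℝ) (hF1 : ContDiff ℝ (⊤ : ℕ∞) F1) (hF2 : ContDiff ℝ (⊤ : ℕ∞) F2)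
    (s t : ℝ) (ht : 0 < t) :
    pd1 (fun s t => F1 (rhoHat s t) + F2 (phiC s t) / (rhoHat s t) ^ 2) s t
      = deriv F1 (rhoHat s t) * s / ((1 + s^2 + t^2)^2 * rhoHat s t)
        + deriv F2 (phiC s t) * ((1 + s^2 + t^2) * t) / (s^2 + t^2)^2
        - F2 (phiC s t) * (2*s) / (s^2 + t^2)^2 := by
  have hr2 : s^2 + t^2 ≠ 0 := by positivity
  have hd : (1 : ℝ) + s^2 + t^2 ≠ 0 := by positivity
  have ht' : t ≠ 0 := ne_of_gt ht
  have hu : ((s^2 + t^2) / (1 + s^2 + t^2)) ≠ 0 := by positivity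
  have hρpos : 0 < rhoHat s t := Real.sqrt_pos.mpr (by positivity)
  have hρ : rhoHat s t ≠ 0 := ne_of_gt hρpos
  have hsq : HasDerivAt (fun x : ℝ => x^2) (2*s) s := by
    simpa using hasDerivAt_pow 2 s
  have hnum : HasDerivAt (fun x : ℝ => x^2 + t^2) (2*s) s := hsq.add_const _
  have hden : HasDerivAt (fun x : ℝ => 1 + x^2 + t^2) (2*s) s := by
    simpa using (hsq.const_add 1).add_const (t^2)
  have hu' : HasDerivAt (fun x : ℝ => (x^2 + t^2) / (1 + x^2 + t^2))
      ((2*s * (1 + s^2 + t^2) - (s^2 + t^2) * (2*s)) / (1 + s^2 + t^2)^2) s :=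
    hnum.div hden hd
  have hρ' : HasDerivAt (fun x => rhoHat x t)
      (1 / (2 * rhoHat s t) * ((2*s * (1 + s^2 + t^2) - (s^2 + t^2) * (2*s)) / (1 + s^2 + t^2)^2)) s := by
    have := (Real.hasDerivAt_sqrt hu).comp s hu'
    simpa [rhoHat, Function.comp_def] using this
  have hF1' : HasDerivAt (fun x => F1 (rhoHat x t))
      (deriv F1 (rhoHat s t) * (1 / (2 * rhoHat s t) * ((2*s * (1 + s^2 + t^2) - (s^2 + t^2) * (2*s)) / (1 + s^2 + t^2)^2))) s :=
    ((hF1.differentiable (by simp) (rhoHat s t)).hasDerivAt).comp s hρ'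
  have hq : HasDerivAt (fun x : ℝ => x / t) (1 / t) s := by
    simpa using (hasDerivAt_id s).div_const t
  have hφ : HasDerivAt (fun x => phiC x t)
      (1 / (1 + (s/t)^2) * (1 / t)) s := by
    have := (Real.hasDerivAt_arctan (s/t)).comp s hq
    simpa [phiC, Function.comp_def] using this
  have hF2' : HasDerivAt (fun x => F2 (phiC x t))
      (deriv F2 (phiC s t) * (1 / (1 + (s/t)^2) * (1 / t))) s :=
    ((hF2.differentiable (by simp) (phiC s t)).hasDerivAt).comp s hφ
  have hratio : HasDerivAt (fun x : ℝ => (1 + x^2 + t^2) / (x^2 + t^2))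
      ((2*s * (s^2 + t^2) - (1 + s^2 + t^2) * (2*s)) / (s^2 + t^2)^2) s :=
    hden.div hnum hr2
  have htot : HasDerivAt (fun x => F1 (rhoHat x t) + F2 (phiC x t) * ((1 + x^2 + t^2) / (x^2 + t^2))) _ s :=
    hF1'.add (hF2'.mul hratio)
  have hfe : (fun x => F1 (rhoHat x t) + F2 (phiC x t) / (rhoHat x t) ^ 2)
      = (fun x => F1 (rhoHat x t) + F2 (phiC x t) * ((1 + x^2 + t^2) / (x^2 + t^2))) :=
    funext fun x => V_eq' F1 F2 x t
  rw [pd1, hfe, htot.deriv]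
  have h1t : (1 : ℝ) + (s/t)^2 = (s^2 + t^2) / t^2 := by field_simp; ring
  rw [h1t]
  field_simp
  ring

lemma pd2_V_eq (F1 F2 : ℝ → ℝ) (hF1 : ContDiff ℝ (⊤ : ℕ∞) F1) (hF2 : ContDiff ℝ (⊤ : ℕ∞) F2)
    (s t : ℝ) (ht : 0 < t) :
    pd2 (fun s t => F1 (rhoHat s t) + F2 (phiC s t) / (rhoHat s t) ^ 2) s t
      = deriv F1 (rhoHat s t) * t / ((1 + s^2 + t^2)^2 * rhoHat s t)
        - deriv F2 (phiC s t) * ((1 + s^2 + t^2) * s) / (s^2 + t^2)^2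
        - F2 (phiC s t) * (2*t) / (s^2 + t^2)^2 := by
  have hr2 : s^2 + t^2 ≠ 0 := by positivity
  have hd : (1 : ℝ) + s^2 + t^2 ≠ 0 := by positivity
  have ht' : t ≠ 0 := ne_of_gt ht
  have hu : ((s^2 + t^2) / (1 + s^2 + t^2)) ≠ 0 := by positivity
  have hρpos : 0 < rhoHat s t := Real.sqrt_pos.mpr (by positivity)
  have hρ : rhoHat s t ≠ 0 := ne_of_gt hρpos
  have hsq : HasDerivAt (fun y : ℝ => y^2) (2*t) t := by
    simpa using hasDerivAt_pow 2 t
  have hnum : HasDerivAt (fun y : ℝ => s^2 + y^2) (2*t) t := hsq.const_add _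
  have hden : HasDerivAt (fun y : ℝ => 1 + s^2 + y^2) (2*t) t := hsq.const_add _
  have hu' : HasDerivAt (fun y : ℝ => (s^2 + y^2) / (1 + s^2 + y^2))
      ((2*t * (1 + s^2 + t^2) - (s^2 + t^2) * (2*t)) / (1 + s^2 + t^2)^2) t :=
    hnum.div hden hd
  have hρ' : HasDerivAt (fun y => rhoHat s y)
      (1 / (2 * rhoHat s t) * ((2*t * (1 + s^2 + t^2) - (s^2 + t^2) * (2*t)) / (1 + s^2 + t^2)^2)) t := by
    have := (Real.hasDerivAt_sqrt hu).comp t hu'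
    simpa [rhoHat, Function.comp_def] using this
  have hF1' : HasDerivAt (fun y => F1 (rhoHat s y))
      (deriv F1 (rhoHat s t) * (1 / (2 * rhoHat s t) * ((2*t * (1 + s^2 + t^2) - (s^2 + t^2) * (2*t)) / (1 + s^2 + t^2)^2))) t :=
    ((hF1.differentiable (by simp) (rhoHat s t)).hasDerivAt).comp t hρ'
  have hq : HasDerivAt (fun y : ℝ => s / y) (s * (-(t^2)⁻¹)) t := by
    simpa [div_eq_mul_inv] using (hasDerivAt_inv ht').const_mul s
  have hφ : HasDerivAt (fun y => phiC s y)
      (1 / (1 + (s/t)^2) * (s * (-(t^2)⁻¹))) t := by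
    have := (Real.hasDerivAt_arctan (s/t)).comp t hq
    simpa [phiC, Function.comp_def] using this
  have hF2' : HasDerivAt (fun y => F2 (phiC s y))
      (deriv F2 (phiC s t) * (1 / (1 + (s/t)^2) * (s * (-(t^2)⁻¹)))) t :=
    ((hF2.differentiable (by simp) (phiC s t)).hasDerivAt).comp t hφ
  have hratio : HasDerivAt (fun y : ℝ => (1 + s^2 + y^2) / (s^2 + y^2))
      ((2*t * (s^2 + t^2) - (1 + s^2 + t^2) * (2*t)) / (s^2 + t^2)^2) t :=
    hden.div hnum hr2
  have htot : HasDerivAt (fun y => F1 (rhoHat s y) + F2 (phiC s y) * ((1 + s^2 + y^2) / (s^2 + y^2))) _ t :=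
    hF1'.add (hF2'.mul hratio)
  have hfe : (fun y => F1 (rhoHat s y) + F2 (phiC s y) / (rhoHat s y) ^ 2)
      = (fun y => F1 (rhoHat s y) + F2 (phiC s y) * ((1 + s^2 + y^2) / (s^2 + y^2))) :=
    funext fun y => V_eq' F1 F2 s y
  rw [pd2, hfe, htot.deriv]
  have h1t : (1 : ℝ) + (s/t)^2 = (s^2 + t^2) / t^2 := by field_simp; ring
  rw [h1t]
  field_simp
  ring

lemma inner_col0 (F1 F2 : ℝ → ℝ) (hF1 : ContDiff ℝ (⊤ : ℕ∞) F1) (hF2 : ContDiff ℝ (⊤ : ℕ∞) F2)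
    (s t : ℝ) (ht : 0 < t) :
    (∑ j : Fin 2, Khat2 s t j 0 *
        pdc j (fun s t => F1 (rhoHat s t) + F2 (phiC s t) / (rhoHat s t) ^ 2) s t)
      = t * deriv F2 (Real.arctan (s / t)) / (s^2 + t^2) := by
  have hr2 : s^2 + t^2 ≠ 0 := by positivity
  have hd : (1 : ℝ) + s^2 + t^2 ≠ 0 := by positivity
  have hρ : rhoHat s t ≠ 0 := ne_of_gt (Real.sqrt_pos.mpr (by positivity))
  rw [Fin.sum_univ_two, Khat2_apply']
  simp only [pdc, Matrix.smul_apply, Matrix.cons_val', Matrix.cons_val_zero,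
    Matrix.cons_val_one, Matrix.head_cons, Matrix.head_fin_const, Matrix.empty_val',
    Matrix.cons_val_fin_one, Matrix.of_apply, smul_eq_mul, if_pos rfl,
    show (1 : Fin 2) ≠ 0 by decide, if_neg, if_true, if_false]
  rw [pd1_V_eq F1 F2 hF1 hF2 s t ht, pd2_V_eq F1 F2 hF1 hF2 s t ht, phiC]
  field_simp
  ring

lemma inner_col1 (F1 F2 : ℝ → ℝ) (hF1 : ContDiff ℝ (⊤ : ℕ∞) F1) (hF2 : ContDiff ℝ (⊤ : ℕ∞) F2)
    (s t : ℝ) (ht : 0 < t) :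
    (∑ j : Fin 2, Khat2 s t j 1 *
        pdc j (fun s t => F1 (rhoHat s t) + F2 (phiC s t) / (rhoHat s t) ^ 2) s t)
      = -s * deriv F2 (Real.arctan (s / t)) / (s^2 + t^2) := by
  have hr2 : s^2 + t^2 ≠ 0 := by positivity
  have hd : (1 : ℝ) + s^2 + t^2 ≠ 0 := by positivity
  have hρ : rhoHat s t ≠ 0 := ne_of_gt (Real.sqrt_pos.mpr (by positivity))
  rw [Fin.sum_univ_two, Khat2_apply']
  simp only [pdc, Matrix.smul_apply, Matrix.cons_val', Matrix.cons_val_zero,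
    Matrix.cons_val_one, Matrix.head_cons, Matrix.head_fin_const, Matrix.empty_val',
    Matrix.cons_val_fin_one, Matrix.of_apply, smul_eq_mul, if_pos rfl,
    show (1 : Fin 2) ≠ 0 by decide, if_neg, if_true, if_false]
  rw [pd1_V_eq F1 F2 hF1 hF2 s t ht, pd2_V_eq F1 F2 hF1 hF2 s t ht, phiC]
  field_simp
  ring

/-- If `V = F₁(ρ̂) + F₂(φ)/ρ̂²` with smooth `F₁, F₂`, `ρ̂ = √((q₁²+q₂²)/(1+q₁²+q₂²))`,
`φ = arctan(q₁/q₂)`, then `V` satisfies `d(K^{(2)} ĝ⁻¹ dV) = 0` on the open set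
`q₂ > 0` (so `(q₁,q₂) ≠ (0,0)`). -/
theorem polar_potential_satisfies_BD
    (F1 F2 : ℝ → ℝ) (hF1 : ContDiff ℝ (⊤ : ℕ∞) F1) (hF2 : ContDiff ℝ (⊤ : ℕ∞) F2) :
    ∀ q1 q2 : ℝ, 0 < q2 →
      (let V : ℝ → ℝ → ℝ := fun s t =>
        F1 (rhoHat s t) + F2 (phiC s t) / (rhoHat s t) ^ 2
       pd1 (fun s t => ∑ j : Fin 2, Khat2 s t j 1 * pdc j V s t) q1 q2
        - pd2 (fun s t => ∑ j : Fin 2, Khat2 s t j 0 * pdc j V s t) q1 q2 = 0) := by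
  intro q1 q2 hq2
  show pd1 (fun s t => ∑ j : Fin 2, Khat2 s t j 1 *
          pdc j (fun s t => F1 (rhoHat s t) + F2 (phiC s t) / (rhoHat s t) ^ 2) s t) q1 q2
      - pd2 (fun s t => ∑ j : Fin 2, Khat2 s t j 0 *
          pdc j (fun s t => F1 (rhoHat s t) + F2 (phiC s t) / (rhoHat s t) ^ 2) s t) q1 q2 = 0
  have hq2' : q2 ≠ 0 := ne_of_gt hq2
  have hr2 : q1^2 + q2^2 ≠ 0 := by positivity
  have hF2inf : ContDiff ℝ (⊤ : ℕ∞) F2 := hF2.of_le (by simp)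
  have hg : Differentiable ℝ (deriv F2) :=
    ((contDiff_infty_iff_deriv.mp hF2inf).2).differentiable (by simp)
  -- derivative of deriv F2 ∘ arctan(x/q2) in x at q1
  have hq : HasDerivAt (fun x : ℝ => x / q2) (1 / q2) q1 := by
    simpa using (hasDerivAt_id q1).div_const q2
  have hφ1 : HasDerivAt (fun x => Real.arctan (x / q2))
      (1 / (1 + (q1/q2)^2) * (1 / q2)) q1 :=
    by have := (Real.hasDerivAt_arctan (q1/q2)).comp q1 hq; exact this
  have hg1 : HasDerivAt (fun x => deriv F2 (Real.arctan (x / q2)))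
      (deriv (deriv F2) (Real.arctan (q1/q2)) * (1 / (1 + (q1/q2)^2) * (1 / q2))) q1 :=
    by have := ((hg (Real.arctan (q1/q2))).hasDerivAt).comp q1 hφ1; exact this
  have hsq1 : HasDerivAt (fun x : ℝ => x^2 + q2^2) (2*q1) q1 := by
    simpa using (hasDerivAt_pow 2 q1).add_const (q2^2)
  have hnum1 : HasDerivAt (fun x => -x * deriv F2 (Real.arctan (x / q2)))
      (-1 * deriv F2 (Real.arctan (q1/q2)) +
        -q1 * (deriv (deriv F2) (Real.arctan (q1/q2)) * (1 / (1 + (q1/q2)^2) * (1 / q2)))) q1 :=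
    ((hasDerivAt_id q1).neg).mul hg1
  have htot1 : HasDerivAt (fun x => -x * deriv F2 (Real.arctan (x / q2)) / (x^2 + q2^2)) _ q1 :=
    hnum1.div hsq1 hr2
  -- derivative in y at q2
  have hqy : HasDerivAt (fun y : ℝ => q1 / y) (q1 * (-(q2^2)⁻¹)) q2 := by
    simpa [div_eq_mul_inv] using (hasDerivAt_inv hq2').const_mul q1
  have hφ2 : HasDerivAt (fun y => Real.arctan (q1 / y))
      (1 / (1 + (q1/q2)^2) * (q1 * (-(q2^2)⁻¹))) q2 :=
    (Real.hasDerivAt_arctan (q1/q2)).comp q2 hqy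
  have hg2 : HasDerivAt (fun y => deriv F2 (Real.arctan (q1 / y)))
      (deriv (deriv F2) (Real.arctan (q1/q2)) * (1 / (1 + (q1/q2)^2) * (q1 * (-(q2^2)⁻¹)))) q2 :=
    by have := ((hg (Real.arctan (q1/q2))).hasDerivAt).comp q2 hφ2; exact this
  have hsq2 : HasDerivAt (fun y : ℝ => q1^2 + y^2) (2*q2) q2 := by
    simpa using ((hasDerivAt_pow 2 q2).const_add (q1^2))
  have hnum2 : HasDerivAt (fun y => y * deriv F2 (Real.arctan (q1 / y)))
      (1 * deriv F2 (Real.arctan (q1/q2)) +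
        q2 * (deriv (deriv F2) (Real.arctan (q1/q2)) * (1 / (1 + (q1/q2)^2) * (q1 * (-(q2^2)⁻¹))))) q2 :=
    (hasDerivAt_id q2).mul hg2
  have htot2 : HasDerivAt (fun y => y * deriv F2 (Real.arctan (q1 / y)) / (q1^2 + y^2)) _ q2 :=
    hnum2.div hsq2 hr2
  have hA : pd1 (fun s t => ∑ j : Fin 2, Khat2 s t j 1 *
          pdc j (fun s t => F1 (rhoHat s t) + F2 (phiC s t) / (rhoHat s t) ^ 2) s t) q1 q2
      = deriv (fun x => -x * deriv F2 (Real.arctan (x / q2)) / (x^2 + q2^2)) q1 := by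
    rw [pd1]
    congr 1
    funext x
    rw [inner_col1 F1 F2 hF1 hF2 x q2 hq2]
  have hB : pd2 (fun s t => ∑ j : Fin 2, Khat2 s t j 0 *
          pdc j (fun s t => F1 (rhoHat s t) + F2 (phiC s t) / (rhoHat s t) ^ 2) s t) q1 q2
      = deriv (fun y => y * deriv F2 (Real.arctan (q1 / y)) / (q1^2 + y^2)) q2 := by
    rw [pd2]
    apply Filter.EventuallyEq.deriv_eq
    filter_upwards [eventually_gt_nhds hq2] with y hy
    rw [inner_col0 F1 F2 hF1 hF2 q1 y hy]
  rw [hA, hB, htot1.deriv, htot2.deriv]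
  have h1t : (1 : ℝ) + (q1/q2)^2 = (q1^2 + q2^2) / q2^2 := by field_simp; ring
  rw [h1t]
  field_simp
  ring
end
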